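/- Let (Ω, ℱ, ℙ) be a probability space, T > 0, and X : [0,T] → Ω → ℝ a process with X_t measurable, E[|X_t|²] < ∞ for all t ∈ [0,T], and sup_{s ∈ [0,T]} E[|X_s|²] < ∞. Let m > 0 and η ∈ A(m) with activation function φ, and fix t ∈ [0,T]. Then the sequence (S_n(X,t))_{n ≥ 1} is uniformly bounded in probability: for every ε > 0 there exists M > 0 such that ℙ(|S_n(X,t)| ≥ M) ≤ ε for all n ≥ 1. -/

import Mathlib

open MeasureTheory Filter

def ClassA (m : ℝ) (η : ℝ → ℝ) : Prop :=
  Monotone η ∧ (∀ t : ℝ, m ≤ t → η t = 1) ∧ (∀ t : ℝ, t ≤ -m → η t = 0)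

noncomputable def act (m : ℝ) (η : ℝ → ℝ) (t : ℝ) : ℝ :=
  η (t + m) - η (t - m)

/-- The stochastic interpolation neural network operator (SINNO) with nodes
`t_k = k * (T / n)`, `k = 0, …, n`, and step `δ = T / n`. -/
noncomputable def SINNO {Ω : Type*} (m : ℝ) (η : ℝ → ℝ) (T : ℝ) (n : ℕ)
    (X : ℝ → Ω → ℝ) (t : ℝ) (ω : Ω) : ℝ :=
  ∑ k ∈ Finset.range (n + 1),
    X (k * (T / n)) ω * act m η ((2 * m / (T / n)) * (t - k * (T / n)))

/-- The mean-square modulus of continuity of a stochastic process `X` on `[0, T]`. -/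
noncomputable def msModulus {Ω : Type*} [MeasurableSpace Ω] (P : Measure Ω) (T : ℝ)
    (X : ℝ → Ω → ℝ) (h : ℝ) : ℝ :=
  sSup {e : ℝ | ∃ t ∈ Set.Icc (0 : ℝ) T, ∃ s ∈ Set.Icc (0 : ℝ) T,
    |t - s| ≤ h ∧ e = ∫ ω, (X t ω - X s ω) ^ 2 ∂P}

lemma eta_bounds {m : ℝ} {η : ℝ → ℝ} (hm : 0 < m) (hη : ClassA m η) (x : ℝ) :
    0 ≤ η x ∧ η x ≤ 1 := by
  obtain ⟨hmono, h1, h0⟩ := hη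
  constructor
  · have := h0 (min x (-m)) (min_le_right _ _)
    calc (0:ℝ) = η (min x (-m)) := this.symm
    _ ≤ η x := hmono (min_le_left _ _)
  · have := h1 (max x m) (le_max_right _ _)
    calc η x ≤ η (max x m) := hmono (le_max_left _ _)
    _ = 1 := this

lemma act_nonneg {m : ℝ} {η : ℝ → ℝ} (hm : 0 < m) (hη : ClassA m η) (x : ℝ) :
    0 ≤ act m η x := by
  have := hη.1 (show x - m ≤ x + m by linarith)
  simpa [act] using this

lemma sum_act_le_one {m : ℝ} {η : ℝ → ℝ} (hm : 0 < m) (hη : ClassA m η)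
    {δ : ℝ} (hδ : 0 < δ) (t : ℝ) (n : ℕ) :
    ∑ k ∈ Finset.range (n + 1), act m η ((2 * m / δ) * (t - k * δ)) ≤ 1 := by
  set c := 2 * m / δ with hc
  have hcδ : c * δ = 2 * m := by rw [hc, div_mul_cancel₀ _ hδ.ne']
  have key : ∀ k ∈ Finset.range (n + 1),
      act m η (c * (t - k * δ)) =
        η (c * (t - k * δ) + m) - η (c * (t - (k + 1 : ℕ) * δ) + m) := by
    intro k _
    have : c * (t - (k + 1 : ℕ) * δ) + m = c * (t - k * δ) - m := by
      push_cast; linear_combination -hcδ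
    rw [act, this]
  rw [Finset.sum_congr rfl key, Finset.sum_range_sub' (fun k => η (c * (t - k * δ) + m))]
  have h1 := (eta_bounds hm hη (c * (t - (0:ℕ) * δ) + m)).2
  have h2 := (eta_bounds hm hη (c * (t - ((n+1:ℕ) : ℝ) * δ) + m)).1
  linarith

theorem sinno_uniformly_bounded_in_probability {Ω : Type*} [MeasurableSpace Ω] (P : Measure Ω)
    [IsProbabilityMeasure P] (T : ℝ) (hT : 0 < T) (X : ℝ → Ω → ℝ)
    (hmeas : ∀ s ∈ Set.Icc (0 : ℝ) T, Measurable (X s))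
    (hL2 : ∀ s ∈ Set.Icc (0 : ℝ) T, Integrable (fun ω => (X s ω) ^ 2) P)
    (hbdd : BddAbove {e : ℝ | ∃ s ∈ Set.Icc (0 : ℝ) T, e = ∫ ω, (X s ω) ^ 2 ∂P})
    (m : ℝ) (hm : 0 < m) (η : ℝ → ℝ) (hη : ClassA m η)
    (t : ℝ) (ht : t ∈ Set.Icc (0 : ℝ) T) :
    ∀ ε > 0, ∃ M > 0, ∀ n : ℕ, 1 ≤ n →
      P {ω | M ≤ |SINNO m η T n X t ω|} ≤ ENNReal.ofReal ε := by
  intro ε hε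
  obtain ⟨C, hC⟩ := hbdd
  have h00 : (0:ℝ) ∈ Set.Icc (0:ℝ) T := ⟨le_refl 0, hT.le⟩
  have hC0 : 0 ≤ C := by
    have : (∫ ω, (X 0 ω) ^ 2 ∂P) ∈ {e : ℝ | ∃ s ∈ Set.Icc (0 : ℝ) T, e = ∫ ω, (X s ω) ^ 2 ∂P} :=
      ⟨0, h00, rfl⟩
    have h2 := hC this
    have h3 : 0 ≤ ∫ ω, (X 0 ω) ^ 2 ∂P := integral_nonneg fun ω => sq_nonneg _
    linarith
  refine ⟨(1 + C) / ε, by positivity, ?_⟩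
  intro n hn
  have hn0 : (0:ℝ) < n := by exact_mod_cast hn
  have hδ : 0 < T / n := div_pos hT hn0
  -- nodes in [0,T]
  have hnode : ∀ k ∈ Finset.range (n + 1), ((k : ℝ) * (T / n)) ∈ Set.Icc (0:ℝ) T := by
    intro k hk
    have hk' : (k : ℝ) ≤ n := by
      exact_mod_cast Nat.lt_succ_iff.mp (Finset.mem_range.mp hk)
    constructor
    · positivity
    · calc (k : ℝ) * (T / n) ≤ n * (T / n) := by
            apply mul_le_mul_of_nonneg_right hk' hδ.le
      _ = T := by field_simp
  -- integrability of each X at the nodes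
  have hXint : ∀ k ∈ Finset.range (n + 1), Integrable (X ((k : ℝ) * (T / n))) P := by
    intro k hk
    have hs := hnode k hk
    have hmem : MemLp (X ((k : ℝ) * (T / n))) 2 P := by
      rw [memLp_two_iff_integrable_sq (hmeas _ hs).aestronglyMeasurable]
      exact hL2 _ hs
    exact hmem.integrable (by norm_num)
  -- each node integral of |X| is ≤ 1 + C
  have habs : ∀ k ∈ Finset.range (n + 1), ∫ ω, |X ((k : ℝ) * (T / n)) ω| ∂P ≤ 1 + C := by
    intro k hk
    have hs := hnode k hk
    have h1 : ∫ ω, |X ((k : ℝ) * (T / n)) ω| ∂P ≤ ∫ ω, (1 + (X ((k : ℝ) * (T / n)) ω) ^ 2) ∂P := by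
      apply integral_mono (hXint k hk).abs ((integrable_const 1).add (hL2 _ hs))
      intro ω
      simp only [Pi.add_apply]
      nlinarith [sq_nonneg (|X ((k : ℝ) * (T / n)) ω| - 1), abs_nonneg (X ((k : ℝ) * (T / n)) ω),
        sq_abs (X ((k : ℝ) * (T / n)) ω)]
    have h2 : ∫ ω, (1 + (X ((k : ℝ) * (T / n)) ω) ^ 2) ∂P
        = 1 + ∫ ω, (X ((k : ℝ) * (T / n)) ω) ^ 2 ∂P := by
      rw [integral_add (integrable_const 1) (hL2 _ hs)]; simp
    have h3 : ∫ ω, (X ((k : ℝ) * (T / n)) ω) ^ 2 ∂P ≤ C := hC ⟨_, hs, rfl⟩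
    linarith
  set S := SINNO m η T n X t with hS
  set φ : ℕ → ℝ := fun k => act m η ((2 * m / (T / n)) * (t - k * (T / n))) with hφ
  have hφ0 : ∀ k, 0 ≤ φ k := fun k => act_nonneg hm hη _
  have hφsum : ∑ k ∈ Finset.range (n + 1), φ k ≤ 1 := sum_act_le_one hm hη hδ t n
  -- integrability of S
  have hSint : Integrable S P := by
    rw [hS]
    apply integrable_finset_sum
    intro k hk
    exact (hXint k hk).mul_const _
  -- pointwise bound
  have hptw : ∀ ω, |S ω| ≤ ∑ k ∈ Finset.range (n + 1), |X ((k : ℝ) * (T / n)) ω| * φ k := by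
    intro ω
    rw [hS, SINNO]
    refine (Finset.abs_sum_le_sum_abs _ _).trans ?_
    apply Finset.sum_le_sum
    intro k hk
    rw [abs_mul]
    exact mul_le_mul_of_nonneg_left (le_of_eq (abs_of_nonneg (hφ0 k))) (abs_nonneg _)
  -- integral bound
  have hIbound : ∫ ω, |S ω| ∂P ≤ 1 + C := by
    have h1 : ∫ ω, |S ω| ∂P
        ≤ ∫ ω, (∑ k ∈ Finset.range (n + 1), |X ((k : ℝ) * (T / n)) ω| * φ k) ∂P := by
      apply integral_mono hSint.abs
      · apply integrable_finset_sum
        intro k hk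
        exact (hXint k hk).abs.mul_const _
      · exact hptw
    have h2 : ∫ ω, (∑ k ∈ Finset.range (n + 1), |X ((k : ℝ) * (T / n)) ω| * φ k) ∂P
        = ∑ k ∈ Finset.range (n + 1), (∫ ω, |X ((k : ℝ) * (T / n)) ω| ∂P) * φ k := by
      rw [integral_finset_sum]
      · congr 1; ext k; rw [integral_mul_const]
      · intro k hk; exact (hXint k hk).abs.mul_const _
    have h3 : ∑ k ∈ Finset.range (n + 1), (∫ ω, |X ((k : ℝ) * (T / n)) ω| ∂P) * φ k
        ≤ ∑ k ∈ Finset.range (n + 1), (1 + C) * φ k := by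
      apply Finset.sum_le_sum
      intro k hk
      exact mul_le_mul_of_nonneg_right (habs k hk) (hφ0 k)
    have h4 : ∑ k ∈ Finset.range (n + 1), (1 + C) * φ k ≤ 1 + C := by
      rw [← Finset.mul_sum]
      nlinarith [hφsum, Finset.sum_nonneg (fun k (_ : k ∈ Finset.range (n+1)) => hφ0 k)]
    linarith
  -- Markov
  have hM : (0:ℝ) < (1 + C) / ε := by positivity
  have hmarkov := mul_meas_ge_le_integral_of_nonneg
    (f := fun ω => |S ω|) (Eventually.of_forall fun ω => abs_nonneg _) hSint.abs ((1 + C) / ε)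
  have hfin : P {ω | (1 + C) / ε ≤ |S ω|} ≠ ⊤ := measure_ne_top _ _
  have htoReal : (P {ω | (1 + C) / ε ≤ |S ω|}).toReal ≤ ε := by
    have h5 : ((1 + C) / ε) * (P {ω | (1 + C) / ε ≤ |S ω|}).toReal ≤ 1 + C :=
      hmarkov.trans hIbound
    rw [div_mul_eq_mul_div, div_le_iff₀ hε] at h5
    nlinarith [ENNReal.toReal_nonneg (a := P {ω | (1 + C) / ε ≤ |S ω|})]
  calc P {ω | (1 + C) / ε ≤ |S ω|}
      = ENNReal.ofReal ((P {ω | (1 + C) / ε ≤ |S ω|}).toReal) := (ENNReal.ofReal_toReal hfin).symm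
    _ ≤ ENNReal.ofReal ε := ENNReal.ofReal_le_ofReal htoReal
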